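/- Define τ_{b|x} := (1/4)[ I + ((−1)^b/√2)( Z + x X ) ] for b, x ∈ {0,1}, and Charlie's measurement operators M_{c|0} = (I + (−1)^c (2Z+X)/√5)/2 and M_{c|1} = (I + (−1)^c X)/2 for c ∈ {0,1}. Let P(b,c|x,z) := Tr[ τ_{b|x} M_{c|z} ] and define the correlators E(x,z) := ∑_{b,c∈{0,1}} (−1)^{b+c} P(b,c|x,z). Then the CHSH combination satisfies E(0,0) − E(0,1) + E(1,0) + E(1,1) = (√5 + 1)/√2, which is strictly greater than 2. Hence the behavior P violates the CHSH inequality. -/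

import Mathlib

open Matrix BigOperators ComplexOrder

noncomputable section

/-- Pauli X matrix. -/
def X : Matrix (Fin 2) (Fin 2) ℂ := !![0, 1; 1, 0]

/-- Pauli Z matrix. -/
def Z : Matrix (Fin 2) (Fin 2) ℂ := !![1, 0; 0, -1]

/-- The wired bipartite assemblage τ_{b|x}. -/
def τ : Fin 2 → Fin 2 → Matrix (Fin 2) (Fin 2) ℂ := fun b x =>
  (1 / 4 : ℝ) • ((1 : Matrix (Fin 2) (Fin 2) ℂ) +
    ((-1 : ℝ) ^ (b : ℕ) / Real.sqrt 2) • (Z + ((x : ℕ) : ℝ) • X))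

/-- Charlie's measurement operators: the (2Z+X)/√5 basis for z = 0, the X basis for z = 1. -/
def Mc : Fin 2 → Fin 2 → Matrix (Fin 2) (Fin 2) ℂ := fun c z =>
  if z = 0 then
    (1 / 2 : ℝ) • ((1 : Matrix (Fin 2) (Fin 2) ℂ) +
      ((-1 : ℝ) ^ (c : ℕ) / Real.sqrt 5) • ((2 : ℝ) • Z + X))
  else
    (1 / 2 : ℝ) • ((1 : Matrix (Fin 2) (Fin 2) ℂ) + ((-1 : ℝ) ^ (c : ℕ)) • X)

/-- The behavior obtained from τ by Charlie's measurements. -/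
def Pbeh (b c x z : Fin 2) : ℂ := (τ b x * Mc c z).trace

/-- The correlators of the behavior. -/
def E (x z : Fin 2) : ℂ :=
  ∑ b : Fin 2, ∑ c : Fin 2, (-1 : ℂ) ^ ((b : ℕ) + (c : ℕ)) * Pbeh b c x z

/-!
Write `τ_{b|x} = ¼(1 + (-1)^b A_x)` and `M_{c|z} = ½(1 + (-1)^c B_z)`. In the signed sum defining
`E(x,z)` every term of `Tr[τ_{b|x} M_{c|z}]` except the product one cancels, so
`E(x,z) = ½ Tr[A_x B_z]`, the dot product of the Bloch vectors `a_x = (1, x)/√2`,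
`m_0 = (2, 1)/√5`, `m_1 = (0, 1)` (coordinates along `Z` and `X`). Hence the CHSH combination is
`2/√10 - 0 + 3/√10 + 1/√2 = (√5 + 1)/√2`, and `(√5 + 1)² = 6 + 2√5 > 8`.
-/

def zxPauli (p q : ℝ) : Matrix (Fin 2) (Fin 2) ℂ := p • Z + q • X

theorem trace_zxPauli_mul_zxPauli (p q p' q' : ℝ) :
    (zxPauli p q * zxPauli p' q').trace = ((2 * (p * p' + q * q') : ℝ) : ℂ) := by
  simp [zxPauli, X, Z, Matrix.trace_fin_two]
  ring

theorem signed_sum_trace_mul {n : Type*} [Fintype n] [DecidableEq n] (A B : Matrix n n ℂ) :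
    ∑ b : Fin 2, ∑ c : Fin 2, (-1 : ℂ) ^ ((b : ℕ) + (c : ℕ)) *
      (((1 / 4 : ℝ) • (1 + ((-1 : ℝ) ^ (b : ℕ)) • A)) *
        ((1 / 2 : ℝ) • (1 + ((-1 : ℝ) ^ (c : ℕ)) • B))).trace = (A * B).trace / 2 := by
  simp [Fin.sum_univ_two, Matrix.mul_add, Matrix.add_mul, Matrix.trace_add, Matrix.trace_smul]
  ring

theorem τ_eq (b x : Fin 2) :
    τ b x = (1 / 4 : ℝ) • (1 + ((-1 : ℝ) ^ (b : ℕ)) •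
      zxPauli (1 / Real.sqrt 2) ((x : ℕ) / Real.sqrt 2)) := by
  simp only [τ, zxPauli, smul_add, smul_smul, div_eq_mul_inv, one_mul]
  ring_nf

theorem Mc_zero_eq (c : Fin 2) :
    Mc c 0 = (1 / 2 : ℝ) • (1 + ((-1 : ℝ) ^ (c : ℕ)) •
      zxPauli (2 / Real.sqrt 5) (1 / Real.sqrt 5)) := by
  simp only [Mc, if_true, zxPauli, smul_add, smul_smul, div_eq_mul_inv, one_mul]
  ring_nf

theorem Mc_one_eq (c : Fin 2) :
    Mc c 1 = (1 / 2 : ℝ) • (1 + ((-1 : ℝ) ^ (c : ℕ)) • zxPauli 0 1) := by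
  simp [Mc, zxPauli]

theorem E_eq_of_Mc_eq (x z : Fin 2) (p q : ℝ)
    (hM : ∀ c, Mc c z = (1 / 2 : ℝ) • (1 + ((-1 : ℝ) ^ (c : ℕ)) • zxPauli p q)) :
    E x z = ((((p + (x : ℕ) * q) / Real.sqrt 2) : ℝ) : ℂ) := by
  simp only [E, Pbeh, τ_eq, hM, signed_sum_trace_mul, trace_zxPauli_mul_zxPauli]
  push_cast
  ring

theorem two_lt_sqrt_five_add_one_div_sqrt_two : (2 : ℝ) < (Real.sqrt 5 + 1) / Real.sqrt 2 := by
  have h1 : 1 < Real.sqrt 5 := Real.lt_sqrt_of_sq_lt (by norm_num)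
  rw [lt_div_iff₀ (by positivity)]
  refine lt_of_pow_lt_pow_left₀ 2 (by positivity) ?_
  nlinarith [Real.sq_sqrt (show (0 : ℝ) ≤ 5 by norm_num), Real.sq_sqrt (show (0 : ℝ) ≤ 2 by norm_num)]

/-- The CHSH combination of the correlators equals (√5+1)/√2, which exceeds 2:
the behavior violates the CHSH inequality. -/
theorem chsh_violation :
    E 0 0 - E 0 1 + E 1 0 + E 1 1 = (((Real.sqrt 5 + 1) / Real.sqrt 2 : ℝ) : ℂ) ∧
    (2 : ℝ) < (Real.sqrt 5 + 1) / Real.sqrt 2 := by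
  refine ⟨?_, two_lt_sqrt_five_add_one_div_sqrt_two⟩
  rw [E_eq_of_Mc_eq 0 0 _ _ Mc_zero_eq, E_eq_of_Mc_eq 0 1 _ _ Mc_one_eq,
    E_eq_of_Mc_eq 1 0 _ _ Mc_zero_eq, E_eq_of_Mc_eq 1 1 _ _ Mc_one_eq]
  norm_cast
  simp only [Fin.val_zero, Fin.val_one, Nat.cast_zero, Nat.cast_one]
  have h5 : Real.sqrt 5 ≠ 0 := by positivity
  field_simp
  linear_combination -Real.mul_self_sqrt (show (0 : ℝ) ≤ 5 by norm_num)
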